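/- Let L be a levellised n-lattice with dep(n−1) = k, and let A and B be antichains in L. Suppose for some level ℓ: the binary weights of A ∩ lev_d(L) and B ∩ lev_d(L) agree for all d with k ≥ d > ℓ (in the notation of the paper, for d = k,…,ℓ+1), and wt(A ∩ lev_ℓ(L)) < wt(B ∩ lev_ℓ(L)). Then the same holds with A, B replaced by their up-sets ↑A, ↑B: wt((↑A) ∩ lev_d(L)) = wt((↑B) ∩ lev_d(L)) for those d, and wt((↑A) ∩ lev_ℓ(L)) < wt((↑B) ∩ lev_ℓ(L)); and conversely. -/

import Mathlib

namespace PaperLattice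

variable {N : ℕ}

/-- Depth: one less than the maximum length of a chain from `t` down to `a` w.r.t. `le`. -/
noncomputable def dep (le : Fin N → Fin N → Prop) (t a : Fin N) : ℕ :=
  sSup {k | ∃ l : List (Fin N), List.Chain' (fun x y => le y x ∧ y ≠ x) l ∧
    l.head? = some t ∧ l.getLast? = some a ∧ l.length = k + 1}

/-- The `d`-th level: elements of depth `d`. -/
noncomputable def lev (le : Fin N → Fin N → Prop) (t : Fin N) (d : ℕ) : Set (Fin N) :=
  {a | dep le t a = d}

/-- A labelled poset is levellised if depth is monotone in the nonzero labels. -/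
def Levellised (le : Fin N → Fin N → Prop) (t : Fin N) : Prop :=
  ∀ i j : Fin N, 0 < (i : ℕ) → (i : ℕ) ≤ (j : ℕ) → dep le t i ≤ dep le t j

def lt' (le : Fin N → Fin N → Prop) (a b : Fin N) : Prop := le a b ∧ a ≠ b

/-- `b` covers `a`. -/
def CovByRel (le : Fin N → Fin N → Prop) (a b : Fin N) : Prop :=
  lt' le a b ∧ ∀ x, lt' le a x → lt' le x b → False

/-- The covering set of `a`. -/
def cov (le : Fin N → Fin N → Prop) (a : Fin N) : Set (Fin N) := {b | CovByRel le a b}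

/-- The up-set of `A`. -/
def upset (le : Fin N → Fin N → Prop) (A : Set (Fin N)) : Set (Fin N) :=
  {x | ∃ a ∈ A, le a x}

def AntichainRel (le : Fin N → Fin N → Prop) (A : Set (Fin N)) : Prop :=
  ∀ a ∈ A, ∀ b ∈ A, a ≠ b → ¬ le a b

/-- Binary weight of a set of labels. -/
noncomputable def wt (A : Set (Fin N)) : ℕ :=
  ∑ j : Fin N, A.indicator (fun j => 2 ^ (j : ℕ)) j

/-- `z` is a bottom and `o` a top for `le`. -/
def Bounds (le : Fin N → Fin N → Prop) (z o : Fin N) : Prop :=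
  (∀ a, le z a) ∧ (∀ a, le a o)

/-- The order obtained from `le` by adding `m` new atoms, the `i`-th having covering set `A i`. -/
def extLe {n m : ℕ} (le : Fin n → Fin n → Prop) (A : Fin m → Set (Fin n)) :
    Fin (n + m) → Fin (n + m) → Prop := fun x y =>
  if hx : (x : ℕ) < n then
    if hy : (y : ℕ) < n then le ⟨x, hx⟩ ⟨y, hy⟩
    else (x : ℕ) = 0
  else
    if hy : (y : ℕ) < n then
      (⟨y, hy⟩ : Fin n) ∈ upset le (A ⟨(x : ℕ) - n, by have := x.isLt; omega⟩)
    else x = y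

/-- The relabelled order `π(L)`. -/
def permLe {n : ℕ} (π : Equiv.Perm (Fin n)) (le : Fin n → Fin n → Prop) :
    Fin n → Fin n → Prop := fun a b => le (π.symm a) (π.symm b)

/-!
For an antichain `A`, the level-`d` part of `↑A` is the disjoint union of `A ∩ lev d` and the
elements of level `d` lying strictly above `A`. Since depth strictly decreases going up, the
latter only depend on the levels of `A` above `d`. So `A` and `B` agree on the levels
`k, …, ℓ + 1` iff `↑A` and `↑B` do (downward induction on the level for the converse), and then
at level `ℓ` the weights of `↑A`, `↑B` exceed those of `A`, `B` by the same amount. Binary weight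
is injective, so equal weights mean equal sets.
-/

section Depth

variable {N : ℕ} {le : Fin N → Fin N → Prop} {t : Fin N}

def chainDepths (le : Fin N → Fin N → Prop) (t a : Fin N) : Set ℕ :=
  {k | ∃ l : List (Fin N), l.IsChain (fun x y => le y x ∧ y ≠ x) ∧
    l.head? = some t ∧ l.getLast? = some a ∧ l.length = k + 1}

theorem dep_eq_sSup_chainDepths (a : Fin N) : dep le t a = sSup (chainDepths le t a) := rfl

theorem chainDepths_bddAbove [IsPartialOrder (Fin N) le] (a : Fin N) :
    BddAbove (chainDepths le t a) := by
  refine ⟨N, fun k ⟨l, hl, _, _, hlen⟩ => ?_⟩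
  have : IsTrans (Fin N) (fun x y => le y x ∧ y ≠ x) :=
    ⟨fun x y z ⟨hyx, hne⟩ ⟨hzy, _⟩ =>
      ⟨_root_.trans hzy hyx, fun hzx => hne (antisymm hyx (hzx ▸ hzy))⟩⟩
  have hnodup : l.Nodup := (List.isChain_iff_pairwise.mp hl).imp fun h => h.2.symm
  exact (by simpa [hlen] using hnodup.length_le_card : k < N).le

theorem chainDepths_nonempty (htop : ∀ a, le a t) (a : Fin N) :
    (chainDepths le t a).Nonempty := by
  by_cases h : a = t
  · exact ⟨0, [t], List.isChain_singleton t, rfl, by simp [h], rfl⟩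
  · exact ⟨1, [t, a], List.isChain_pair.mpr ⟨htop a, h⟩, rfl, rfl, rfl⟩

theorem dep_lt_dep_of_le_of_ne [IsPartialOrder (Fin N) le] (htop : ∀ a, le a t)
    {a b : Fin N} (hab : le a b) (hne : a ≠ b) : dep le t b < dep le t a := by
  obtain ⟨l, hl, hhead, hlast, hlen⟩ :=
    Nat.sSup_mem (chainDepths_nonempty htop b) (chainDepths_bddAbove (t := t) b)
  -- Extending a longest chain from `t` to `b` by `a` gives a longer chain from `t` to `a`.
  have hext : dep le t b + 1 ∈ chainDepths le t a := by
    refine ⟨l ++ [a], ?_, ?_, List.getLast?_concat, ?_⟩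
    · refine List.isChain_append.mpr ⟨hl, List.isChain_singleton a, fun x hx y hy => ?_⟩
      obtain rfl : b = x := by simpa [hlast] using hx
      obtain rfl : a = y := by simpa using hy
      exact ⟨hab, hne⟩
    · cases l with
      | nil => simp at hhead
      | cons x l => simpa using hhead
    · simp [hlen, dep_eq_sSup_chainDepths]
  exact le_csSup (chainDepths_bddAbove a) hext

end Depth

section Weight

variable {N : ℕ}

theorem wt_eq_geomSum (S : Set (Fin N)) [DecidablePred (· ∈ S)] :
    wt S = ∑ i ∈ (Finset.univ.filter (· ∈ S)).map Fin.valEmbedding, 2 ^ i := by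
  rw [Finset.sum_map, Finset.sum_filter, wt]
  exact Finset.sum_congr rfl fun j _ => by simp [Set.indicator_apply]

theorem wt_injective : Function.Injective (wt : Set (Fin N) → ℕ) := by
  classical
  intro S T h
  rw [wt_eq_geomSum, wt_eq_geomSum] at h
  have := Finset.map_injective _ (Finset.geomSum_injective le_rfl h)
  ext j
  simpa using Finset.ext_iff.mp this j

theorem wt_union_of_disjoint {S T : Set (Fin N)} (h : Disjoint S T) :
    wt (S ∪ T) = wt S + wt T := by
  simp only [wt, Set.indicator_union_of_disjoint h, Finset.sum_add_distrib]

end Weight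

section Upset

variable {N : ℕ} {le : Fin N → Fin N → Prop} {t : Fin N} {A B : Set (Fin N)}

def strictUpset (le : Fin N → Fin N → Prop) (A : Set (Fin N)) : Set (Fin N) :=
  {x | ∃ a ∈ A, le a x ∧ a ≠ x}

theorem upset_eq_union_strictUpset [Std.Refl le] (A : Set (Fin N)) :
    upset le A = A ∪ strictUpset le A := by
  ext x
  constructor
  · rintro ⟨a, ha, hax⟩
    by_cases h : a = x
    · exact Or.inl (h ▸ ha)
    · exact Or.inr ⟨a, ha, hax, h⟩
  · rintro (hx | ⟨a, ha, hax, -⟩)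
    exacts [⟨x, hx, refl x⟩, ⟨a, ha, hax⟩]

theorem AntichainRel.disjoint_strictUpset (hA : AntichainRel le A) :
    Disjoint A (strictUpset le A) :=
  Set.disjoint_left.mpr fun x hx ⟨a, ha, hax, hne⟩ => hA a ha x hx hne hax

theorem AntichainRel.wt_upset_inter_lev [Std.Refl le] (hA : AntichainRel le A) (d : ℕ) :
    wt (upset le A ∩ lev le t d) = wt (A ∩ lev le t d) + wt (strictUpset le A ∩ lev le t d) := by
  rw [upset_eq_union_strictUpset, Set.union_inter_distrib_right,
    wt_union_of_disjoint (hA.disjoint_strictUpset.mono Set.inter_subset_left Set.inter_subset_left)]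

theorem AntichainRel.inter_lev_eq_diff [Std.Refl le] (hA : AntichainRel le A) (d : ℕ) :
    A ∩ lev le t d = (upset le A ∩ lev le t d) \ (strictUpset le A ∩ lev le t d) := by
  rw [upset_eq_union_strictUpset, Set.union_inter_distrib_right, Set.union_sdiff_cancel_right]
  exact (hA.disjoint_strictUpset.mono Set.inter_subset_left Set.inter_subset_left).le_bot

variable [IsPartialOrder (Fin N) le] {k : ℕ}

theorem strictUpset_inter_lev_subset (htop : ∀ a, le a t) (hAk : ∀ a ∈ A, dep le t a ≤ k) {d : ℕ}
    (h : ∀ d', d < d' → d' ≤ k → A ∩ lev le t d' ⊆ B ∩ lev le t d') :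
    strictUpset le A ∩ lev le t d ⊆ strictUpset le B ∩ lev le t d := by
  rintro x ⟨⟨a, ha, hax, hne⟩, hx⟩
  have hdep : d < dep le t a := hx ▸ dep_lt_dep_of_le_of_ne htop hax hne
  exact ⟨⟨a, (h _ hdep (hAk a ha) ⟨ha, rfl⟩).1, hax, hne⟩, hx⟩

theorem strictUpset_inter_lev_eq (htop : ∀ a, le a t) (hAk : ∀ a ∈ A, dep le t a ≤ k)
    (hBk : ∀ b ∈ B, dep le t b ≤ k) {d : ℕ}
    (h : ∀ d', d < d' → d' ≤ k → A ∩ lev le t d' = B ∩ lev le t d') :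
    strictUpset le A ∩ lev le t d = strictUpset le B ∩ lev le t d :=
  (strictUpset_inter_lev_subset htop hAk fun d' hd hdk => (h d' hd hdk).le).antisymm
    (strictUpset_inter_lev_subset htop hBk fun d' hd hdk => (h d' hd hdk).ge)

theorem inter_lev_eq_of_upset_inter_lev_eq (htop : ∀ a, le a t)
    (hA : AntichainRel le A) (hB : AntichainRel le B)
    (hAk : ∀ a ∈ A, dep le t a ≤ k) (hBk : ∀ b ∈ B, dep le t b ≤ k) {ℓ : ℕ}
    (h : ∀ d, ℓ < d → d ≤ k → upset le A ∩ lev le t d = upset le B ∩ lev le t d) :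
    ∀ d, ℓ < d → d ≤ k → A ∩ lev le t d = B ∩ lev le t d
  | d, hℓd, hdk => by
    rw [hA.inter_lev_eq_diff, hB.inter_lev_eq_diff, h d hℓd hdk,
      strictUpset_inter_lev_eq htop hAk hBk fun d' hdd' hd'k =>
        inter_lev_eq_of_upset_inter_lev_eq htop hA hB hAk hBk h d' (hℓd.trans hdd') hd'k]
termination_by d => k - d

theorem inter_lev_eq_iff_upset_inter_lev_eq (htop : ∀ a, le a t)
    (hA : AntichainRel le A) (hB : AntichainRel le B)
    (hAk : ∀ a ∈ A, dep le t a ≤ k) (hBk : ∀ b ∈ B, dep le t b ≤ k) (ℓ : ℕ) :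
    (∀ d, ℓ < d → d ≤ k → A ∩ lev le t d = B ∩ lev le t d) ↔
      ∀ d, ℓ < d → d ≤ k → upset le A ∩ lev le t d = upset le B ∩ lev le t d := by
  refine ⟨fun h d hℓd hdk => ?_, inter_lev_eq_of_upset_inter_lev_eq htop hA hB hAk hBk⟩
  rw [upset_eq_union_strictUpset, upset_eq_union_strictUpset, Set.union_inter_distrib_right,
    Set.union_inter_distrib_right, h d hℓd hdk,
    strictUpset_inter_lev_eq htop hAk hBk fun d' hdd' hd'k => h d' (hℓd.trans hdd') hd'k]

end Upset

/-- the level-by-level lexicographic comparison of weights of two antichains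
agrees with that of their up-sets. -/
theorem statement13 {n : ℕ} (hn : 2 ≤ n) (L : Lattice (Fin n))
    (hb : Bounds L.le ⟨0, by omega⟩ ⟨1, by omega⟩)
    (hlev : Levellised L.le ⟨1, by omega⟩)
    (k : ℕ) (hk : dep L.le ⟨1, by omega⟩ ⟨n - 1, by omega⟩ = k)
    (A B : Set (Fin n))
    (hA : AntichainRel L.le A) (hA0 : ∀ a ∈ A, a ≠ ⟨0, by omega⟩)
    (hB : AntichainRel L.le B) (hB0 : ∀ a ∈ B, a ≠ ⟨0, by omega⟩)
    (ℓ : ℕ) :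
    ((∀ d : ℕ, ℓ < d → d ≤ k →
        wt (A ∩ lev L.le ⟨1, by omega⟩ d) = wt (B ∩ lev L.le ⟨1, by omega⟩ d)) ∧
      wt (A ∩ lev L.le ⟨1, by omega⟩ ℓ) < wt (B ∩ lev L.le ⟨1, by omega⟩ ℓ)) ↔
    ((∀ d : ℕ, ℓ < d → d ≤ k →
        wt (upset L.le A ∩ lev L.le ⟨1, by omega⟩ d) =
          wt (upset L.le B ∩ lev L.le ⟨1, by omega⟩ d)) ∧
      wt (upset L.le A ∩ lev L.le ⟨1, by omega⟩ ℓ) <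
        wt (upset L.le B ∩ lev L.le ⟨1, by omega⟩ ℓ)) := by
  have : IsPartialOrder (Fin n) L.le :=
    { refl := L.le_refl, trans := L.le_trans, antisymm := L.le_antisymm }
  have hdep (a : Fin n) (ha : a ≠ ⟨0, by omega⟩) : dep L.le ⟨1, by omega⟩ a ≤ k :=
    hk ▸ hlev a _ (Nat.pos_of_ne_zero fun h => ha (Fin.ext h)) (Nat.le_sub_one_of_lt a.isLt)
  have hAk a (haA : a ∈ A) := hdep a (hA0 a haA)
  have hBk b (hbB : b ∈ B) := hdep b (hB0 b hbB)
  simp only [wt_injective.eq_iff]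
  rw [← inter_lev_eq_iff_upset_inter_lev_eq hb.2 hA hB hAk hBk]
  refine and_congr_right fun hagree => ?_
  rw [hA.wt_upset_inter_lev, hB.wt_upset_inter_lev, strictUpset_inter_lev_eq hb.2 hAk hBk hagree]
  exact Nat.add_lt_add_iff_right.symm

end PaperLattice
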